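/- Let P be an orthogonal projection on ℂⁿ, x₀ ∈ ℂⁿ, {β_i} ⊂ (0,1), and let x_i = (I−P)x_{i-1} + √(1−β_i) P x_{i-1} + √(β_i) P z_{i-1} with z_{i-1} independent standard Gaussians. Then conditionally on x₀, x_N is Gaussian with mean (I−P)x₀ + (∏_{i=1}^N √(1−β_i)) P x₀ and covariance (1 − ∏_{i=1}^N (1−β_i)) P. -/

import Mathlib

open MeasureTheory ProbabilityTheory Real

noncomputable def G : Measure ℝ := gaussianReal 0 1

instance : IsProbabilityMeasure G := by unfold G; infer_instance

lemma G_eq : G = volume.withDensity (gaussianPDF 0 1) :=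
  gaussianReal_of_var_ne_zero 0 one_ne_zero

lemma G_prod : G.prod G
    = (volume : Measure (ℝ × ℝ)).withDensity
        (fun p => gaussianPDF 0 1 p.1 * gaussianPDF 0 1 p.2) := by
  rw [MeasureTheory.Measure.volume_eq_prod]
  symm
  apply (Measure.prod_eq _).symm
  intro s t hs ht
  rw [withDensity_apply _ (hs.prod ht), ← Measure.prod_restrict,
    lintegral_prod_mul ((measurable_gaussianPDF 0 1).aemeasurable)
      ((measurable_gaussianPDF 0 1).aemeasurable)]
  rw [G_eq, withDensity_apply _ hs, withDensity_apply _ ht]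

lemma map_equiv_withDensity {α β : Type*} [MeasurableSpace α] [MeasurableSpace β]
    (e : α ≃ᵐ β) (μ : Measure α) (f : β → ENNReal) (hf : Measurable f) :
    Measure.map e (μ.withDensity (f ∘ e)) = (Measure.map e μ).withDensity f := by
  ext s hs
  rw [Measure.map_apply e.measurable hs, withDensity_apply _ (e.measurable hs),
    withDensity_apply _ hs, setLIntegral_map hs hf e.measurable]
  rfl

lemma gaussianPDFReal_mul_invariant {x y x' y' : ℝ} (h : x ^ 2 + y ^ 2 = x' ^ 2 + y' ^ 2) :
    gaussianPDFReal 0 1 x * gaussianPDFReal 0 1 y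
      = gaussianPDFReal 0 1 x' * gaussianPDFReal 0 1 y' := by
  simp only [gaussianPDFReal]
  rw [mul_mul_mul_comm, ← Real.exp_add, mul_mul_mul_comm, ← Real.exp_add]
  congr 1
  rw [Real.exp_eq_exp]
  field_simp
  linarith

noncomputable def rotL (c s : ℝ) : ℝ × ℝ →ₗ[ℝ] ℝ × ℝ where
  toFun p := (c * p.1 + s * p.2, -s * p.1 + c * p.2)
  map_add' p q := by simp; constructor <;> ring
  map_smul' a p := by simp; constructor <;> ring

lemma rotL_det (c s : ℝ) (h : c ^ 2 + s ^ 2 = 1) : LinearMap.det (rotL c s) = 1 := by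
  rw [← LinearMap.det_toMatrix (Module.Basis.finTwoProd ℝ), Matrix.det_fin_two]
  simp [LinearMap.toMatrix_apply, Module.Basis.finTwoProd, rotL]
  nlinarith [h]

noncomputable def rotE (c s : ℝ) (h : c ^ 2 + s ^ 2 = 1) : (ℝ × ℝ) ≃ᵐ (ℝ × ℝ) :=
  (LinearEquiv.ofLinear (rotL c s) (rotL c (-s))
    (by ext <;> simp [rotL] <;> nlinarith [h]
        )
    (by ext <;> simp [rotL] <;> nlinarith [h]
        )).toContinuousLinearEquiv.toHomeomorph.toMeasurableEquiv

example (c s : ℝ) (h : c ^ 2 + s ^ 2 = 1) : ⇑(rotE c s h) = ⇑(rotL c s) := rfl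
example (c s : ℝ) (h : c ^ 2 + s ^ 2 = 1) : ⇑(rotE c s h).symm = ⇑(rotL c (-s)) := rfl

lemma map_rot (c s : ℝ) (h : c ^ 2 + s ^ 2 = 1) :
    Measure.map (rotE c s h) (G.prod G) = G.prod G := by
  have hdens : Measurable (fun p : ℝ × ℝ => gaussianPDF 0 1 p.1 * gaussianPDF 0 1 p.2) :=
    ((measurable_gaussianPDF 0 1).comp measurable_fst).mul
      ((measurable_gaussianPDF 0 1).comp measurable_snd)
  have hinv : (fun p : ℝ × ℝ => gaussianPDF 0 1 p.1 * gaussianPDF 0 1 p.2)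
      ∘ (rotE c s h) = fun p => gaussianPDF 0 1 p.1 * gaussianPDF 0 1 p.2 := by
    funext p
    simp only [Function.comp_apply]
    show gaussianPDF 0 1 (c * p.1 + s * p.2) * gaussianPDF 0 1 (-s * p.1 + c * p.2)
      = gaussianPDF 0 1 p.1 * gaussianPDF 0 1 p.2
    simp only [gaussianPDF_def]
    rw [← ENNReal.ofReal_mul (gaussianPDFReal_nonneg _ _ _),
      ← ENNReal.ofReal_mul (gaussianPDFReal_nonneg _ _ _)]
    congr 1
    exact gaussianPDFReal_mul_invariant (by nlinarith [h])
  have hmapvol : Measure.map (rotE c s h) (volume : Measure (ℝ × ℝ)) = volume := by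
    have : Measure.map (⇑(rotL c s)) (volume : Measure (ℝ × ℝ))
        = ENNReal.ofReal |(LinearMap.det (rotL c s))⁻¹| • volume :=
      Measure.map_linearMap_addHaar_eq_smul_addHaar volume (by rw [rotL_det c s h]; norm_num)
    rw [show ⇑(rotE c s h) = ⇑(rotL c s) from rfl, this, rotL_det c s h]
    norm_num
  calc Measure.map (rotE c s h) (G.prod G)
      = Measure.map (rotE c s h)
          (volume.withDensity
            ((fun p : ℝ × ℝ => gaussianPDF 0 1 p.1 * gaussianPDF 0 1 p.2) ∘ (rotE c s h))) := by
        rw [hinv, G_prod]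
    _ = (Measure.map (rotE c s h) volume).withDensity
          (fun p : ℝ × ℝ => gaussianPDF 0 1 p.1 * gaussianPDF 0 1 p.2) :=
        map_equiv_withDensity _ _ _ hdens
    _ = G.prod G := by rw [hmapvol, ← G_prod]

lemma map_rot_fst (c s : ℝ) (h : c ^ 2 + s ^ 2 = 1) :
    Measure.map (fun p : ℝ × ℝ => c * p.1 + s * p.2) (G.prod G) = G := by
  have : (fun p : ℝ × ℝ => c * p.1 + s * p.2) = Prod.fst ∘ (rotE c s h) := rfl
  rw [this, ← Measure.map_map measurable_fst (rotE c s h).measurable, map_rot,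
    Measure.map_fst_prod, measure_univ, one_smul]

lemma map_addmul (a b : ℝ) :
    Measure.map (fun p : ℝ × ℝ => a * p.1 + b * p.2) (G.prod G)
      = gaussianReal 0 ⟨a ^ 2 + b ^ 2, by positivity⟩ := by
  by_cases hab : a ^ 2 + b ^ 2 = 0
  · have ha : a = 0 := by nlinarith [sq_nonneg a, sq_nonneg b]
    have hb : b = 0 := by nlinarith [sq_nonneg a, sq_nonneg b]
    subst ha; subst hb
    have : (⟨(0:ℝ) ^ 2 + 0 ^ 2, by positivity⟩ : NNReal) = 0 := by ext; norm_num
    have h0 : gaussianReal (0:ℝ) ⟨(0:ℝ) ^ 2 + 0 ^ 2, by positivity⟩ = Measure.dirac 0 := by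
      rw [← gaussianReal_zero_var (0:ℝ)]
      congr 1
    rw [h0]
    simp only [zero_mul, add_zero]
    rw [Measure.map_const, measure_univ, one_smul]
  · set r : ℝ := Real.sqrt (a ^ 2 + b ^ 2) with hr
    have hr2 : r ^ 2 = a ^ 2 + b ^ 2 := Real.sq_sqrt (by positivity)
    have hrpos : 0 < r := Real.sqrt_pos.2 (lt_of_le_of_ne (by positivity) (Ne.symm hab))
    have hfun : (fun p : ℝ × ℝ => a * p.1 + b * p.2)
        = (fun x => r * x) ∘ (fun p : ℝ × ℝ => (a / r) * p.1 + (b / r) * p.2) := by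
      funext p; simp only [Function.comp_apply]; field_simp
    have hcs : (a / r) ^ 2 + (b / r) ^ 2 = 1 := by
      field_simp [hr2]
      linarith
    rw [hfun, ← Measure.map_map (by fun_prop) (by fun_prop), map_rot_fst _ _ hcs]
    show Measure.map (fun x => r * x) G = _
    rw [show G = gaussianReal 0 1 from rfl, gaussianReal_map_const_mul r]
    congr 1
    · ring
    · ext
      simp [hr2]
      rfl

lemma pi_map_comp {ι : Type*} [Fintype ι] {α β : Type*} [MeasurableSpace α] [MeasurableSpace β]
    (μ : Measure α) [IsProbabilityMeasure μ] (φ : α → β) (hφ : Measurable φ) :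
    Measure.map (fun (f : ι → α) i => φ (f i)) (Measure.pi fun _ => μ)
      = Measure.pi (fun _ : ι => μ.map φ) := by
  haveI : IsProbabilityMeasure (μ.map φ) := Measure.isProbabilityMeasure_map hφ.aemeasurable
  symm
  apply Measure.pi_eq
  intro s hs
  rw [Measure.map_apply (show Measurable (fun (f : ι → α) i => φ (f i)) from
    measurable_pi_lambda _ fun i => hφ.comp (measurable_pi_apply i)) (MeasurableSet.univ_pi hs)]
  have hpre : (fun (f : ι → α) i => φ (f i)) ⁻¹' (Set.univ.pi s)
      = Set.univ.pi fun i => φ ⁻¹' s i := by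
    ext f; simp [Set.mem_pi]
  rw [hpre, Measure.pi_pi]
  exact Finset.prod_congr rfl fun i _ => (Measure.map_apply hφ (hs i)).symm

noncomputable def stdG (n : ℕ) : Measure (EuclideanSpace ℝ (Fin n)) :=
  Measure.map (EuclideanSpace.equiv (Fin n) ℝ).symm (Measure.pi fun _ : Fin n => gaussianReal 0 1)

instance (n : ℕ) : IsProbabilityMeasure (stdG n) := by
  unfold stdG
  exact Measure.isProbabilityMeasure_map
    (EuclideanSpace.equiv (Fin n) ℝ).symm.continuous.measurable.aemeasurable

example (n : ℕ) :
    (Measure.pi fun _ : Fin n => gaussianReal 0 1).prod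
      (Measure.pi fun _ : Fin n => gaussianReal 0 1) = Measure.map (MeasurableEquiv.arrowProdEquivProdArrow ℝ ℝ (Fin n))
      (Measure.pi fun _ : Fin n => G.prod G) :=
  (measurePreserving_arrowProdEquivProdArrow ℝ ℝ (Fin n) (fun _ => G) (fun _ => G)).map_eq.symm

example (n : ℕ) (a b : ℝ) : ((fun p : (Fin n → ℝ) × (Fin n → ℝ) =>
      a • p.1 + b • p.2) ∘ (MeasurableEquiv.arrowProdEquivProdArrow ℝ ℝ (Fin n)))
      = fun (f : Fin n → ℝ × ℝ) (j : Fin n) => a * (f j).1 + b * (f j).2 := rfl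

lemma stdP_map_smul_add (n : ℕ) (a b : ℝ) :
    Measure.map (fun p : (Fin n → ℝ) × (Fin n → ℝ) =>
        a • p.1 + b • p.2) ((Measure.pi fun _ : Fin n => gaussianReal 0 1).prod
          (Measure.pi fun _ : Fin n => gaussianReal 0 1))
      = Measure.map (fun v : Fin n → ℝ => Real.sqrt (a ^ 2 + b ^ 2) • v)
          (Measure.pi fun _ : Fin n => gaussianReal 0 1) := by
  have h1 : (Measure.pi fun _ : Fin n => gaussianReal 0 1).prod
      (Measure.pi fun _ : Fin n => gaussianReal 0 1)
      = Measure.map (MeasurableEquiv.arrowProdEquivProdArrow ℝ ℝ (Fin n))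
        (Measure.pi fun _ : Fin n => G.prod G) :=
    (measurePreserving_arrowProdEquivProdArrow ℝ ℝ (Fin n) (fun _ => G) (fun _ => G)).map_eq.symm
  have hφ : Measurable (fun q : ℝ × ℝ => a * q.1 + b * q.2) := by fun_prop
  have hmeas : Measurable (fun p : (Fin n → ℝ) × (Fin n → ℝ) =>
      a • p.1 + b • p.2) := by
    show Measurable (fun p : (Fin n → ℝ) × (Fin n → ℝ) => fun j => a * p.1 j + b * p.2 j)
    exact measurable_pi_lambda _ fun j => by fun_prop
  rw [h1, Measure.map_map hmeas (MeasurableEquiv.arrowProdEquivProdArrow ℝ ℝ (Fin n)).measurable]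
  have h2 : ((fun p : (Fin n → ℝ) × (Fin n → ℝ) =>
      a • p.1 + b • p.2) ∘ (MeasurableEquiv.arrowProdEquivProdArrow ℝ ℝ (Fin n)))
      = fun (f : Fin n → ℝ × ℝ) (j : Fin n) => (fun q : ℝ × ℝ => a * q.1 + b * q.2) (f j) := rfl
  rw [h2, pi_map_comp (G.prod G) _ hφ, map_addmul]
  have h3 : (fun v : Fin n → ℝ => Real.sqrt (a ^ 2 + b ^ 2) • v)
      = fun (f : Fin n → ℝ) (j : Fin n) =>
          (fun x : ℝ => Real.sqrt (a ^ 2 + b ^ 2) * x) (f j) := rfl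
  rw [show (Measure.pi fun _ : Fin n => gaussianReal 0 1) = Measure.pi fun _ : Fin n => G from rfl, h3,
    pi_map_comp G _ (by fun_prop), show G = gaussianReal 0 1 from rfl,
    gaussianReal_map_const_mul]
  have h4 : gaussianReal (Real.sqrt (a ^ 2 + b ^ 2) * 0)
      (⟨Real.sqrt (a ^ 2 + b ^ 2) ^ 2, sq_nonneg _⟩ * 1)
      = gaussianReal 0 ⟨a ^ 2 + b ^ 2, by positivity⟩ := by
    rw [mul_zero]
    congr 1
    ext
    simp [Real.sq_sqrt (by positivity : (0:ℝ) ≤ a ^ 2 + b ^ 2)]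
    exact mul_one _
  congr 1
  funext _
  exact h4.symm

lemma stdG_map_smul_add (n : ℕ) (a b : ℝ) :
    Measure.map (fun p : EuclideanSpace ℝ (Fin n) × EuclideanSpace ℝ (Fin n) =>
        a • p.1 + b • p.2) ((stdG n).prod (stdG n))
      = Measure.map (fun v : EuclideanSpace ℝ (Fin n) => Real.sqrt (a ^ 2 + b ^ 2) • v)
          (stdG n) := by
  have hem : Measurable (EuclideanSpace.equiv (Fin n) ℝ).symm :=
    (EuclideanSpace.equiv (Fin n) ℝ).symm.continuous.measurable
  have hmeas : Measurable (fun p : EuclideanSpace ℝ (Fin n) × EuclideanSpace ℝ (Fin n) =>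
      a • p.1 + b • p.2) := by fun_prop
  have hmeas' : Measurable (fun p : (Fin n → ℝ) × (Fin n → ℝ) => a • p.1 + b • p.2) := by
    fun_prop
  have hc : Measurable (fun v : EuclideanSpace ℝ (Fin n) => Real.sqrt (a ^ 2 + b ^ 2) • v) := by
    fun_prop
  have hc' : Measurable (fun v : Fin n → ℝ => Real.sqrt (a ^ 2 + b ^ 2) • v) := by fun_prop
  unfold stdG
  rw [Measure.map_prod_map _ _ hem hem, Measure.map_map hmeas (hem.prodMap hem),
    Measure.map_map hc hem]
  have h1 : (fun p : EuclideanSpace ℝ (Fin n) × EuclideanSpace ℝ (Fin n) => a • p.1 + b • p.2)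
      ∘ Prod.map (EuclideanSpace.equiv (Fin n) ℝ).symm (EuclideanSpace.equiv (Fin n) ℝ).symm
      = (EuclideanSpace.equiv (Fin n) ℝ).symm
          ∘ (fun p : (Fin n → ℝ) × (Fin n → ℝ) => a • p.1 + b • p.2) := by
    funext p; simp
  have h2 : (fun v : EuclideanSpace ℝ (Fin n) => Real.sqrt (a ^ 2 + b ^ 2) • v)
      ∘ (EuclideanSpace.equiv (Fin n) ℝ).symm
      = (EuclideanSpace.equiv (Fin n) ℝ).symm
          ∘ (fun v : Fin n → ℝ => Real.sqrt (a ^ 2 + b ^ 2) • v) := by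
    funext v; simp
  rw [h1, h2, ← Measure.map_map hem hmeas', ← Measure.map_map hem hc', stdP_map_smul_add]

section Chain

variable {n : ℕ}

noncomputable def Fstep (P : EuclideanSpace ℝ (Fin n) →ₗ[ℝ] EuclideanSpace ℝ (Fin n))
    (β : ℕ → ℝ) (k : ℕ) (u w : EuclideanSpace ℝ (Fin n)) : EuclideanSpace ℝ (Fin n) :=
  (u - P u) + Real.sqrt (1 - β (k + 1)) • P u + Real.sqrt (β (k + 1)) • P w

noncomputable def Ychain (P : EuclideanSpace ℝ (Fin n) →ₗ[ℝ] EuclideanSpace ℝ (Fin n))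
    (β : ℕ → ℝ) (x0 : EuclideanSpace ℝ (Fin n)) :
    ℕ → (ℕ → EuclideanSpace ℝ (Fin n)) → EuclideanSpace ℝ (Fin n)
  | 0 => fun _ => x0
  | (k + 1) => fun f => Fstep P β k (Ychain P β x0 k f) (f k)

end Chain

/-- Conditionally on `x₀`, the discrete HFS forward chain after `N` steps,
driven by independent standard Gaussians, is Gaussian with mean
`(I−P)x₀ + (∏ √(1−β_i)) P x₀` and covariance `(1 − ∏ (1−β_i)) P`; equivalently, its law
is the pushforward of the standard Gaussian under
`v ↦ mean + √(1 − ∏(1−β_i)) • P v` (covariance `s² P P* = (1−∏(1−β_i))P`). -/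
theorem hfs_chain_gaussian_law {n N : ℕ} {Ω : Type*} [MeasureSpace Ω]
    [IsProbabilityMeasure (ℙ : Measure Ω)]
    (P : EuclideanSpace ℝ (Fin n) →ₗ[ℝ] EuclideanSpace ℝ (Fin n))
    (hP : P ∘ₗ P = P)
    (hsa : ∀ x y, (inner ℝ (P x) y : ℝ) = inner ℝ x (P y))
    (β : ℕ → ℝ) (hβ : ∀ i, β i ∈ Set.Ioo (0:ℝ) 1)
    (x0 : EuclideanSpace ℝ (Fin n))
    (z : ℕ → Ω → EuclideanSpace ℝ (Fin n))
    (stdGaussian : Measure (EuclideanSpace ℝ (Fin n)))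
    (hstd : stdGaussian =
      Measure.map (EuclideanSpace.equiv (Fin n) ℝ).symm
        (Measure.pi fun _ : Fin n => gaussianReal 0 1))
    (hzmeas : ∀ i, Measurable (z i))
    (hzlaw : ∀ i, Measure.map (z i) ℙ = stdGaussian)
    (hzindep : iIndepFun z ℙ)
    (x : ℕ → Ω → EuclideanSpace ℝ (Fin n))
    (hx0 : x 0 = fun _ => x0)
    (hx : ∀ i, x (i + 1) = fun ω =>
        (x i ω - P (x i ω)) + Real.sqrt (1 - β (i + 1)) • P (x i ω)
          + Real.sqrt (β (i + 1)) • P (z i ω)) :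
    Measure.map (x N) ℙ =
      Measure.map
        (fun v =>
          ((x0 - P x0) + (∏ i ∈ Finset.range N, Real.sqrt (1 - β (i + 1))) • P x0)
            + Real.sqrt (1 - ∏ i ∈ Finset.range N, (1 - β (i + 1))) • P v)
        stdGaussian := by
  classical
  have hstd' : stdGaussian = stdG n := by
    rw [hstd]
    rfl
  replace hzlaw : ∀ i, Measure.map (z i) ℙ = stdG n := fun i => (hzlaw i).trans hstd'
  rw [hstd']
  clear hstd hstd'
  have hP' : ∀ y, P (P y) = P y := fun y => DFunLike.congr_fun hP y
  have hPm : Measurable P := (LinearMap.continuous_of_finiteDimensional P).measurable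
  have hFmeas : ∀ k, Measurable (fun p :
      EuclideanSpace ℝ (Fin n) × EuclideanSpace ℝ (Fin n) => Fstep P β k p.1 p.2) := by
    intro k
    unfold Fstep; fun_prop
  have hxmeas : ∀ k, Measurable (x k) := by
    intro k
    induction k with
    | zero => rw [hx0]; exact measurable_const
    | succ k ih =>
      rw [hx k]
      have := hzmeas k
      fun_prop
  -- the chain as a measurable function of the noise
  have hYx : ∀ k, x k = fun ω => Ychain P β x0 k (fun i => z i ω) := by
    intro k
    induction k with
    | zero => rw [hx0]; rfl
    | succ k ih =>
      rw [hx k]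
      funext ω
      show _ = Fstep P β k (Ychain P β x0 k (fun i => z i ω)) (z k ω)
      rw [← congrFun ih ω]
      rfl
  have hYmeas : ∀ k, Measurable (Ychain P β x0 k) := by
    intro k
    induction k with
    | zero => exact measurable_const
    | succ k ih =>
      show Measurable fun f => Fstep P β k (Ychain P β x0 k f) (f k)
      unfold Fstep; fun_prop
  have hYdep : ∀ k f g, (∀ i, i < k → f i = g i) →
      Ychain P β x0 k f = Ychain P β x0 k g := by
    intro k
    induction k with
    | zero => intro f g _; rfl
    | succ k ih =>
      intro f g hfg
      show Fstep P β k (Ychain P β x0 k f) (f k) = Fstep P β k (Ychain P β x0 k g) (g k)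
      rw [ih f g (fun i hi => hfg i (Nat.lt_succ_of_lt hi)), hfg k (Nat.lt_succ_self k)]
  have hindep : ∀ k, IndepFun (x k) (z k) ℙ := by
    intro k
    have hbase := hzindep.indepFun_finset (Finset.range k) {k}
      (by simp [Finset.disjoint_left]; omega) hzmeas
    have hg : Measurable (fun t : ((i : Finset.range k) → EuclideanSpace ℝ (Fin n)) =>
        Ychain P β x0 k (fun i => if h : i ∈ Finset.range k then t ⟨i, h⟩ else 0)) := by
      apply (hYmeas k).comp
      apply measurable_pi_lambda
      intro i
      by_cases h : i ∈ Finset.range k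
      · simp only [dif_pos h]; exact measurable_pi_apply _
      · simp only [dif_neg h]; exact measurable_const
    have hh : Measurable (fun t : ((i : ({k} : Finset ℕ)) → EuclideanSpace ℝ (Fin n)) =>
        t ⟨k, by simp⟩) := measurable_pi_apply _
    have hx_eq : x k = (fun t : ((i : Finset.range k) → EuclideanSpace ℝ (Fin n)) =>
        Ychain P β x0 k (fun i => if h : i ∈ Finset.range k then t ⟨i, h⟩ else 0))
          ∘ (fun ω (i : Finset.range k) => z i ω) := by
      funext ω
      rw [hYx k]
      show Ychain P β x0 k (fun i => z i ω)
        = Ychain P β x0 k (fun i => if h : i ∈ Finset.range k then z i ω else 0)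
      exact hYdep k _ _ (fun i hi => by rw [dif_pos (Finset.mem_range.mpr hi)])
    have hz_eq : z k = (fun t : ((i : ({k} : Finset ℕ)) → EuclideanSpace ℝ (Fin n)) =>
        t ⟨k, by simp⟩) ∘ (fun ω (i : ({k} : Finset ℕ)) => z i ω) := rfl
    rw [hx_eq, hz_eq]
    exact hbase.comp hg hh
  -- the law, by induction
  induction N with
  | zero =>
    rw [hx0]
    simp only [Finset.range_zero, Finset.prod_empty, one_smul, sub_add_cancel, sub_self,
      Real.sqrt_zero, zero_smul, add_zero]
    rw [Measure.map_const, Measure.map_const, measure_univ, measure_univ]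
  | succ N ih =>
    have h1β : (0:ℝ) ≤ 1 - β (N + 1) := by linarith [(hβ (N + 1)).2]
    have hQnonneg : (0:ℝ) ≤ ∏ i ∈ Finset.range N, (1 - β (i + 1)) :=
      Finset.prod_nonneg fun i _ => by linarith [(hβ (i + 1)).2]
    have hQle : (∏ i ∈ Finset.range N, (1 - β (i + 1))) ≤ 1 :=
      Finset.prod_le_one (fun i _ => by linarith [(hβ (i + 1)).2])
        (fun i _ => by linarith [(hβ (i + 1)).1])
    have hab : (Real.sqrt (1 - β (N + 1)) * Real.sqrt (1 - ∏ i ∈ Finset.range N, (1 - β (i + 1)))) ^ 2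
        + Real.sqrt (β (N + 1)) ^ 2
        = 1 - ∏ i ∈ Finset.range (N + 1), (1 - β (i + 1)) := by
      rw [mul_pow, Real.sq_sqrt h1β, Real.sq_sqrt (by linarith : (0:ℝ) ≤ 1 - ∏ i ∈ Finset.range N, (1 - β (i + 1))),
        Real.sq_sqrt (le_of_lt (hβ (N + 1)).1), Finset.prod_range_succ]
      ring
    have hjoint : Measure.map (fun ω => (x N ω, z N ω)) ℙ
        = (Measure.map (x N) ℙ).prod (Measure.map (z N) ℙ) :=
      (indepFun_iff_map_prod_eq_prod_map_map (hxmeas N).aemeasurable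
        (hzmeas N).aemeasurable).mp (hindep N)
    have hstep : x (N + 1) = (fun p : EuclideanSpace ℝ (Fin n) × EuclideanSpace ℝ (Fin n) =>
        Fstep P β N p.1 p.2) ∘ (fun ω => (x N ω, z N ω)) := by
      rw [hx N]; rfl
    rw [hstep, ← Measure.map_map (hFmeas N) ((hxmeas N).prodMk (hzmeas N)), hjoint, ih,
      hzlaw N]
    have hgmeas : Measurable (fun v : EuclideanSpace ℝ (Fin n) =>
        ((x0 - P x0) + (∏ i ∈ Finset.range N, Real.sqrt (1 - β (i + 1))) • P x0)
          + Real.sqrt (1 - ∏ i ∈ Finset.range N, (1 - β (i + 1))) • P v) :=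
      measurable_const.add ((hPm.const_smul (Real.sqrt (1 - ∏ i ∈ Finset.range N, (1 - β (i + 1))))))
    have hprod := Measure.map_prod_map (g := (id : EuclideanSpace ℝ (Fin n) → EuclideanSpace ℝ (Fin n)))
      (stdG n) (stdG n) hgmeas measurable_id
    rw [Measure.map_id] at hprod
    rw [hprod, Measure.map_map (hFmeas N) (hgmeas.prodMap measurable_id)]
    have hsmuladd : Measurable (fun p : EuclideanSpace ℝ (Fin n) × EuclideanSpace ℝ (Fin n) =>
        (Real.sqrt (1 - β (N + 1)) * Real.sqrt (1 - ∏ i ∈ Finset.range N, (1 - β (i + 1)))) • p.1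
          + Real.sqrt (β (N + 1)) • p.2) :=
      by fun_prop
    have hmP : Measurable (fun u : EuclideanSpace ℝ (Fin n) =>
        ((x0 - P x0) + (∏ i ∈ Finset.range (N + 1), Real.sqrt (1 - β (i + 1))) • P x0) + P u) :=
      measurable_const.add hPm
    have hcomp : ((fun p : EuclideanSpace ℝ (Fin n) × EuclideanSpace ℝ (Fin n) =>
        Fstep P β N p.1 p.2) ∘ (Prod.map (fun v =>
          ((x0 - P x0) + (∏ i ∈ Finset.range N, Real.sqrt (1 - β (i + 1))) • P x0)
            + Real.sqrt (1 - ∏ i ∈ Finset.range N, (1 - β (i + 1))) • P v) id))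
        = (fun u => ((x0 - P x0)
              + (∏ i ∈ Finset.range (N + 1), Real.sqrt (1 - β (i + 1))) • P x0) + P u)
          ∘ (fun p : EuclideanSpace ℝ (Fin n) × EuclideanSpace ℝ (Fin n) =>
              (Real.sqrt (1 - β (N + 1)) * Real.sqrt (1 - ∏ i ∈ Finset.range N, (1 - β (i + 1)))) • p.1
                + Real.sqrt (β (N + 1)) • p.2) := by
      funext p
      show Fstep P β N (((x0 - P x0) + (∏ i ∈ Finset.range N, Real.sqrt (1 - β (i + 1))) • P x0)
          + Real.sqrt (1 - ∏ i ∈ Finset.range N, (1 - β (i + 1))) • P p.1) p.2 = _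
      simp only [Fstep, Function.comp_apply, map_add, map_sub, _root_.map_smul, hP',
        Finset.prod_range_succ]
      module
    have hsm : Measurable (fun v : EuclideanSpace ℝ (Fin n) =>
        Real.sqrt ((Real.sqrt (1 - β (N + 1))
            * Real.sqrt (1 - ∏ i ∈ Finset.range N, (1 - β (i + 1)))) ^ 2
          + Real.sqrt (β (N + 1)) ^ 2) • v) := by fun_prop
    rw [hcomp, ← Measure.map_map hmP hsmuladd, stdG_map_smul_add, Measure.map_map hmP hsm]
    congr 1
    funext v
    show ((x0 - P x0) + (∏ i ∈ Finset.range (N + 1), Real.sqrt (1 - β (i + 1))) • P x0)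
        + P (Real.sqrt _ • v) = _
    rw [_root_.map_smul, hab]
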